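/- arXiv:2101.09207 — 3 statements merged into one kernel-verified Lean document; each statement's English description precedes it below -/
import Mathlib

section
/- Let Σ be a symmetric positive definite d×d real matrix, μ, μ_old, μ̂ vectors in ℝ^d, and ε > 0. If (μ̂ - μ_old)ᵀ Σ⁻¹ (μ̂ - μ_old) > ε, then the vector μ̃ = (μ̂ + ω μ_old)/(1 + ω) with ω = sqrt((μ̂ - μ_old)ᵀ Σ⁻¹ (μ̂ - μ_old)/ε) − 1 satisfies (μ̃ - μ_old)ᵀ Σ⁻¹ (μ̃ - μ_old) = ε. -/
/-!
The projected mean satisfies `μ̃ - μ_old = (μ̂ - μ_old) / (1 + ω)`, and the Mahalanobis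
quadratic form is homogeneous of degree two, so the distance of `μ̂` is divided by
`(1 + ω)² = m / ε`, where `m` is that distance; what remains is `ε`.
-/

open Matrix

theorem smul_self_dotProduct_mulVec_smul {n R : Type*} [Fintype n] [CommSemiring R]
    (A : Matrix n n R) (c : R) (v : n → R) :
    (c • v) ⬝ᵥ (A *ᵥ (c • v)) = c ^ 2 * (v ⬝ᵥ (A *ᵥ v)) := by
  rw [mulVec_smul, smul_dotProduct, dotProduct_smul, smul_eq_mul, smul_eq_mul, ← mul_assoc, sq]

theorem one_div_one_add_smul_add_smul_sub {K E : Type*} [Field K] [AddCommGroup E] [Module K E]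
    {ω : K} (hω : 1 + ω ≠ 0) (x y : E) :
    (1 / (1 + ω)) • (x + ω • y) - y = (1 / (1 + ω)) • (x - y) := by
  match_scalars <;> field_simp
  ring

theorem one_div_sqrt_div_sq_mul {m ε : ℝ} (hm : 0 < m) (hε : 0 < ε) :
    (1 / √(m / ε)) ^ 2 * m = ε := by
  rw [div_pow, Real.sq_sqrt (by positivity)]
  field_simp

theorem mean_projection_active_general {d : ℕ} (Sig : Matrix (Fin d) (Fin d) ℝ)
    (μold μhat : Fin d → ℝ) (ε : ℝ) (hε : 0 < ε)
    (hviol : (μhat - μold) ⬝ᵥ (Sig⁻¹ *ᵥ (μhat - μold)) > ε)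
    (ω : ℝ) (hω : ω = Real.sqrt ((μhat - μold) ⬝ᵥ (Sig⁻¹ *ᵥ (μhat - μold)) / ε) - 1)
    (μtil : Fin d → ℝ) (hμtil : μtil = (1 / (1 + ω)) • (μhat + ω • μold)) :
    (μtil - μold) ⬝ᵥ (Sig⁻¹ *ᵥ (μtil - μold)) = ε := by
  set m := (μhat - μold) ⬝ᵥ (Sig⁻¹ *ᵥ (μhat - μold))
  have hm : 0 < m := hε.trans hviol
  have hscale : 1 + ω = √(m / ε) := by rw [hω]; ring
  have hscale_ne : 1 + ω ≠ 0 := by rw [hscale]; positivity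
  rw [hμtil, one_div_one_add_smul_add_smul_sub hscale_ne, smul_self_dotProduct_mulVec_smul,
    hscale, one_div_sqrt_div_sq_mul hm hε]

/-- Mahalanobis mean projection attains the bound exactly when the
predicted mean violates the trust region. -/
theorem mean_projection_active {d : ℕ} (Sig : Matrix (Fin d) (Fin d) ℝ)
    (hSig : Sig.PosDef) (μ μold μhat : Fin d → ℝ) (ε : ℝ) (hε : 0 < ε)
    (hviol : (μhat - μold) ⬝ᵥ (Sig⁻¹ *ᵥ (μhat - μold)) > ε)
    (ω : ℝ) (hω : ω = Real.sqrt ((μhat - μold) ⬝ᵥ (Sig⁻¹ *ᵥ (μhat - μold)) / ε) - 1)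
    (μtil : Fin d → ℝ) (hμtil : μtil = (1 / (1 + ω)) • (μhat + ω • μold)) :
    (μtil - μold) ⬝ᵥ (Sig⁻¹ *ᵥ (μtil - μold)) = ε :=
  mean_projection_active_general Sig μold μhat ε hε hviol ω hω μtil hμtil
end

section
/- Let Σ, Σ_old be commuting symmetric positive definite d×d matrices with square roots Σ^{1/2}, Σ_old^{1/2}, and assume t := tr(I + Σ_old⁻¹Σ − 2 Σ_old^{−1/2} Σ^{1/2}) > ε > 0. Define η = sqrt(t/ε) − 1 and S̃ = (Σ^{1/2} + η Σ_old^{1/2})/(1+η), Σ̃ = S̃². Then tr(I + Σ_old⁻¹ Σ̃ − 2 Σ_old^{−1/2} Σ̃^{1/2}) = ε. -/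
/-! The square roots `Σ_old^{1/2}` and `Σ^{1/2}` commute, each being a continuous function of its
square. Hence `M = Σ_old^{-1/2} Σ^{1/2}` satisfies
`Σ_old⁻¹ Σ = M²`, so the constraint value is `t = tr ((M - 1)²)`. Replacing `Σ^{1/2}` by `S̃`
replaces `M` by `(M + η) / (1 + η)`, hence `M - 1` by `(M - 1) / (1 + η)`, and the constraint value
becomes `t / (1 + η)² = t / (t / ε) = ε`. -/

open Matrix
open scoped MatrixOrder

theorem Commute.of_mul_self_right {A : Type*} [PartialOrder A] [Ring A] [StarRing A]
    [TopologicalSpace A] [StarOrderedRing A] [Algebra ℝ A]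
    [ContinuousFunctionalCalculus ℝ A IsSelfAdjoint] [NonnegSpectrumClass ℝ A]
    [IsTopologicalRing A] [T2Space A] {a b : A} (hb : 0 ≤ b) (h : Commute a (b * b)) :
    Commute a b := by
  rw [← CFC.sqrt_mul_self b hb, CFC.sqrt_eq_cfc]
  exact (h.symm.cfc_nnreal _).symm

theorem one_add_mul_self_sub_two_nsmul {A : Type*} [Ring A] (P : A) :
    1 + P * P - 2 • P = (P - 1) * (P - 1) := by
  noncomm_ring

theorem smul_add_smul_one_sub_one {K A : Type*} [Field K] [Ring A] [Algebra K A] (M : A)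
    {η : K} (hη : 1 + η ≠ 0) :
    (1 / (1 + η)) • (M + η • 1) - 1 = (1 / (1 + η)) • (M - 1) := by
  have hc : 1 / (1 + η) * η = 1 - 1 / (1 + η) := by field_simp; ring
  rw [smul_add, smul_smul, hc, smul_sub, sub_smul, one_smul]
  abel

namespace Matrix

variable {n R : Type*} [Fintype n] [DecidableEq n] [CommRing R]

theorem commute_nonsing_inv_left {A B : Matrix n n R} (h : Commute B A) : Commute B⁻¹ A := by
  rw [nonsing_inv_eq_ringInverse]
  by_cases hB : IsUnit B
  · obtain ⟨u, rfl⟩ := hB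
    rw [Ring.inverse_unit]
    exact h.units_inv_left
  · rw [Ring.inverse_non_unit _ hB]
    exact Commute.zero_left A

theorem mul_self_inv_mul_mul_self {A B : Matrix n n R} (h : Commute B A) :
    (B * B)⁻¹ * (A * A) = B⁻¹ * A * (B⁻¹ * A) := by
  rw [mul_inv_rev]
  exact (commute_nonsing_inv_left h).mul_mul_mul_comm _ _

end Matrix

theorem wasserstein_projection_active_general {d : ℕ} (Sig Sold SA SB : Matrix (Fin d) (Fin d) ℝ)
    (hcomm : Sig * Sold = Sold * Sig)
    (hSA : SA.PosDef) (hSA2 : SA * SA = Sig)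
    (hSB : SB.PosDef) (hSB2 : SB * SB = Sold)
    (ε t : ℝ) (hε : 0 < ε)
    (ht : t = ((1 : Matrix (Fin d) (Fin d) ℝ) + Sold⁻¹ * Sig - 2 • (SB⁻¹ * SA)).trace)
    (hviol : t > ε)
    (η : ℝ) (hη : η = Real.sqrt (t / ε) - 1)
    (Stil : Matrix (Fin d) (Fin d) ℝ)
    (hStil : Stil = (1 / (1 + η)) • (SA + η • SB)) :
    ((1 : Matrix (Fin d) (Fin d) ℝ) + Sold⁻¹ * (Stil * Stil) - 2 • (SB⁻¹ * Stil)).trace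
      = ε := by
  have hSoldA : Commute Sold SA := .of_mul_self_right hSA.posSemidef.nonneg (hSA2 ▸ hcomm.symm)
  have hAB : Commute SB SA :=
    (Commute.of_mul_self_right hSB.posSemidef.nonneg (hSB2 ▸ hSoldA.symm)).symm
  have hBStil : Commute SB Stil :=
    hStil ▸ (hAB.add_right ((Commute.refl SB).smul_right η)).smul_right _
  have ht0 : 0 < t := hε.trans hviol
  have h1η : 1 + η = Real.sqrt (t / ε) := by rw [hη]; ring
  have hη0 : 1 + η ≠ 0 := h1η ▸ (Real.sqrt_pos.2 (div_pos ht0 hε)).ne'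
  have hP : SB⁻¹ * Stil = (1 / (1 + η)) • (SB⁻¹ * SA + η • 1) := by
    rw [hStil, Matrix.mul_smul, Matrix.mul_add, Matrix.mul_smul,
      nonsing_inv_mul _ hSB.det_pos.ne'.isUnit]
  have htM : t = ((SB⁻¹ * SA - 1) * (SB⁻¹ * SA - 1)).trace := by
    rw [ht, ← hSB2, ← hSA2, mul_self_inv_mul_mul_self hAB, one_add_mul_self_sub_two_nsmul]
  calc _ = (1 / (1 + η)) ^ 2 * t := by
        rw [← hSB2, mul_self_inv_mul_mul_self hBStil, one_add_mul_self_sub_two_nsmul, hP,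
          smul_add_smul_one_sub_one _ hη0, smul_mul_smul, trace_smul, htM, smul_eq_mul, sq]
    _ = ε := by
        rw [h1η, div_pow, Real.sq_sqrt (div_pos ht0 hε).le]
        field_simp

/-- Wasserstein-2 covariance projection under commutativity: interpolating the
matrix square roots exactly attains the W2 trust-region bound ε. The square roots
SA of Sig and SB of Sold are given as (unique) symmetric positive definite witnesses;
by commutativity, Σ̃^{1/2} = S̃, so the conclusion is stated with S̃ and SB⁻¹. -/
theorem wasserstein_projection_active {d : ℕ} (Sig Sold SA SB : Matrix (Fin d) (Fin d) ℝ)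
    (hSig : Sig.PosDef) (hSold : Sold.PosDef)
    (hcomm : Sig * Sold = Sold * Sig)
    (hSA : SA.PosDef) (hSA2 : SA * SA = Sig)
    (hSB : SB.PosDef) (hSB2 : SB * SB = Sold)
    (ε t : ℝ) (hε : 0 < ε)
    (ht : t = ((1 : Matrix (Fin d) (Fin d) ℝ) + Sold⁻¹ * Sig - 2 • (SB⁻¹ * SA)).trace)
    (hviol : t > ε)
    (η : ℝ) (hη : η = Real.sqrt (t / ε) - 1)
    (Stil : Matrix (Fin d) (Fin d) ℝ)
    (hStil : Stil = (1 / (1 + η)) • (SA + η • SB)) :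
    ((1 : Matrix (Fin d) (Fin d) ℝ) + Sold⁻¹ * (Stil * Stil) - 2 • (SB⁻¹ * Stil)).trace
      = ε :=
  wasserstein_projection_active_general Sig Sold SA SB hcomm hSA hSA2 hSB hSB2 ε t hε ht hviol η hη
    Stil hStil
end

section
/- Let Σ, Σ_old be symmetric positive definite d×d matrices with Σ ≠ Σ_old. Define g: [0,∞) → ℝ by g(η) = the value of the covariance KL objective tr(Σ⁻¹Σ̃(η)) − log det Σ̃(η) at Σ̃(η) = ((ηΣ_old⁻¹ + Σ⁻¹)/(η+1))⁻¹. Then the covariance KL divergence to the old policy, h(η) = ½[tr(Σ_old⁻¹ Σ̃(η)) − d + log(det Σ_old / det Σ̃(η))], is continuous in η, satisfies h(0) = ½[tr(Σ_old⁻¹Σ) − d + log(det Σ_old/det Σ)] > 0, and h(η) → 0 as η → ∞. -/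
/-!
Along `η ↦ Λ̃(η)` the covariance `Λ̃(η)⁻¹` stays positive definite, and the Gaussian KL divergence
is continuous at nonsingular covariances, so `h` is continuous; since `Λ̃(η) → Σ_old⁻¹`, `h(η)`
tends to the divergence of `Σ_old` from itself, which is `0`. For `h(0) > 0`, whiten `Σ` to
`C = R Σ R` with `R = Σ_old^{-1/2}`: then `2 h(0) = tr C - d - log det C = Σᵢ (λᵢ - 1 - log λᵢ)`
over the eigenvalues of `C`, and `log λ ≤ λ - 1` is strict at the eigenvalue `λ ≠ 1` that
`C ≠ 1` provides.
-/

open Matrix Filter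

section InterpPrecision

variable {E : Type*} [AddCommGroup E] [Module ℝ E]

noncomputable def interpPrecision (a b : E) (η : ℝ) : E :=
  (1 / (η + 1)) • (η • a + b)

theorem interpPrecision_zero (a b : E) : interpPrecision a b 0 = b := by
  simp [interpPrecision]

theorem interpPrecision_eq_add_smul_sub (a b : E) {η : ℝ} (hη : η + 1 ≠ 0) :
    interpPrecision a b η = a + (η + 1)⁻¹ • (b - a) := by
  rw [interpPrecision]
  match_scalars
  · field_simp
    ring
  · simp

variable [TopologicalSpace E] [IsTopologicalAddGroup E] [ContinuousSMul ℝ E]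

theorem continuousAt_interpPrecision (a b : E) {η : ℝ} (hη : η + 1 ≠ 0) :
    ContinuousAt (interpPrecision a b) η := by
  unfold interpPrecision
  fun_prop (disch := exact hη)

theorem tendsto_interpPrecision_atTop (a b : E) :
    Tendsto (interpPrecision a b) atTop (nhds a) := by
  have hinv : Tendsto (fun η : ℝ => (η + 1)⁻¹) atTop (nhds 0) :=
    (tendsto_atTop_add_const_right _ _ tendsto_id).inv_tendsto_atTop
  have hlim := tendsto_const_nhds (x := a).add (hinv.smul_const (b - a))
  rw [zero_smul, add_zero] at hlim
  refine hlim.congr' ?_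
  filter_upwards [eventually_ge_atTop 0] with η hη
  rw [interpPrecision_eq_add_smul_sub _ _ (by positivity)]

end InterpPrecision

namespace Matrix

theorem posDef_interpPrecision {n : Type*} {Λ₀ Λ : Matrix n n ℝ} (hΛ₀ : Λ₀.PosSemidef) (hΛ : Λ.PosDef)
    {η : ℝ} (hη : 0 ≤ η) : (interpPrecision Λ₀ Λ η).PosDef :=
  (PosDef.posSemidef_add (hΛ₀.smul hη) hΛ).smul (by positivity)

variable {n : Type*} [Fintype n] [DecidableEq n]

theorem continuousAt_inv_of_det_ne_zero {A : Matrix n n ℝ} (hA : A.det ≠ 0) :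
    ContinuousAt Inv.inv A :=
  continuousAt_matrix_inv A (by rw [Ring.inverse_eq_inv']; exact continuousAt_inv₀ hA)

theorem PosDef.log_det_lt_trace_sub_card {C : Matrix n n ℝ} (hC : C.PosDef) (hne : C ≠ 1) :
    Real.log C.det < C.trace - Fintype.card n := by
  have hpos := hC.eigenvalues_pos
  obtain ⟨i₀, hi₀⟩ : ∃ i, hC.1.eigenvalues i ≠ 1 := by
    by_contra! h
    refine hne (hC.1.spectral_theorem.trans ?_)
    rw [show RCLike.ofReal ∘ hC.1.eigenvalues = 1 from funext h, Pi.one_def, diagonal_one,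
      map_one]
  have hcard : (Fintype.card n : ℝ) = ∑ _i : n, 1 := by simp
  rw [hC.1.det_eq_prod_eigenvalues, hC.1.trace_eq_sum_eigenvalues, hcard,
    ← Finset.sum_sub_distrib]
  simp only [RCLike.ofReal_real_eq_id, id]
  rw [Real.log_prod fun i _ => (hpos i).ne']
  exact Finset.sum_lt_sum (fun i _ => Real.log_le_sub_one_of_pos (hpos i))
    ⟨i₀, Finset.mem_univ _, Real.log_lt_sub_one_of_pos (hpos i₀) hi₀⟩

open scoped MatrixOrder in
theorem PosDef.exists_whitening {S₀ S : Matrix n n ℝ} (hS₀ : S₀.PosDef) (hS : S.PosDef)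
    (hne : S ≠ S₀) :
    ∃ C : Matrix n n ℝ, C.PosDef ∧ C ≠ 1 ∧ C.trace = (S₀⁻¹ * S).trace ∧
      C.det = S.det / S₀.det := by
  set R := CFC.sqrt S₀⁻¹
  have hRR : R * R = S₀⁻¹ := CFC.sqrt_mul_sqrt_self _ hS₀.inv.posSemidef.nonneg
  have hRh : Rᴴ = R := (CFC.sqrt_nonneg S₀⁻¹).posSemidef.isHermitian.eq
  have hR : IsUnit R := isUnit_of_mul_isUnit_left (hRR ▸ hS₀.inv.isUnit)
  have hRd : IsUnit R.det := (isUnit_iff_isUnit_det R).mp hR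
  refine ⟨R * S * R, ?_, fun hC1 => hne ?_, ?_, ?_⟩
  · simpa only [hRh] using hS.mul_mul_conjTranspose_same (vecMul_injective_of_isUnit hR)
  · calc S = R⁻¹ * (R * S * R) * R⁻¹ := by
          rw [mul_assoc R S R, ← mul_assoc R⁻¹, nonsing_inv_mul _ hRd, one_mul, mul_assoc,
            mul_nonsing_inv _ hRd, mul_one]
      _ = (R * R)⁻¹ := by rw [hC1, mul_one, mul_inv_rev]
      _ = S₀ := by rw [hRR, nonsing_inv_nonsing_inv _ hS₀.det_pos.ne'.isUnit]
  · rw [trace_mul_cycle, hRR]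
  · rw [det_mul, det_mul, mul_right_comm, ← det_mul, hRR, det_nonsing_inv, Ring.inverse_eq_inv',
      div_eq_mul_inv, mul_comm]

end Matrix

section CovKL

variable {n : Type*} [Fintype n] [DecidableEq n]

/-- `covKL S₀ S` is `KL(𝒩(μ, S) ‖ 𝒩(μ, S₀))` when both covariances are nonsingular. -/
noncomputable def covKL (S₀ S : Matrix n n ℝ) : ℝ :=
  (1 / 2) * ((S₀⁻¹ * S).trace - Fintype.card n + Real.log (S₀.det / S.det))

theorem covKL_self {S₀ : Matrix n n ℝ} (hS₀ : S₀.det ≠ 0) : covKL S₀ S₀ = 0 := by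
  rw [covKL, nonsing_inv_mul _ hS₀.isUnit, trace_one, div_self hS₀, Real.log_one]
  ring

theorem covKL_pos {S₀ S : Matrix n n ℝ} (hS₀ : S₀.PosDef) (hS : S.PosDef) (hne : S ≠ S₀) :
    0 < covKL S₀ S := by
  obtain ⟨C, hC, hC1, htr, hdet⟩ := hS₀.exists_whitening hS hne
  have hlt := hC.log_det_lt_trace_sub_card hC1
  rw [hdet, Real.log_div hS.det_pos.ne' hS₀.det_pos.ne', htr] at hlt
  rw [covKL, Real.log_div hS₀.det_pos.ne' hS.det_pos.ne']
  linarith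

theorem continuousAt_covKL {S₀ S : Matrix n n ℝ} (hS₀ : S₀.det ≠ 0) (hS : S.det ≠ 0) :
    ContinuousAt (covKL S₀) S := by
  have hdet : ContinuousAt det S := continuous_id.matrix_det.continuousAt
  have htr : ContinuousAt (fun S => (S₀⁻¹ * S).trace) S :=
    (continuous_const.matrix_mul continuous_id).matrix_trace.continuousAt
  exact continuousAt_const.mul ((htr.sub continuousAt_const).add
    ((continuousAt_const.div hdet hS).log (div_ne_zero hS₀ hS)))

end CovKL

/-- Solvability of the KL covariance trust-region dual: along the precision
interpolation Σ̃(η) = ((ηΣ_old⁻¹ + Σ⁻¹)/(η+1))⁻¹, the covariance KL divergence to the old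
policy h(η) = ½[tr(Σ_old⁻¹Σ̃(η)) − d + log(det Σ_old / det Σ̃(η))] is continuous on [0,∞),
is positive at η = 0 (where Σ̃(0) = Σ ≠ Σ_old), and tends to 0 as η → ∞. -/
theorem kl_dual_solvable {d : ℕ} (Sig Sold : Matrix (Fin d) (Fin d) ℝ)
    (hSig : Sig.PosDef) (hSold : Sold.PosDef) (hne : Sig ≠ Sold)
    (Stil : ℝ → Matrix (Fin d) (Fin d) ℝ)
    (hStil : ∀ η, Stil η = ((1 / (η + 1)) • (η • Sold⁻¹ + Sig⁻¹))⁻¹)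
    (h : ℝ → ℝ)
    (hh : ∀ η, h η =
      (1 / 2) * ((Sold⁻¹ * Stil η).trace - d + Real.log (Sold.det / (Stil η).det))) :
    ContinuousOn h (Set.Ici (0 : ℝ)) ∧
    h 0 = (1 / 2) * ((Sold⁻¹ * Sig).trace - d + Real.log (Sold.det / Sig.det)) ∧
    0 < h 0 ∧
    Tendsto h atTop (nhds 0) := by
  have hSold_det : Sold.det ≠ 0 := hSold.det_pos.ne'
  have h_eq : h = (fun Λ => covKL Sold Λ⁻¹) ∘ interpPrecision Sold⁻¹ Sig⁻¹ := by
    funext η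
    show h η = covKL Sold (interpPrecision Sold⁻¹ Sig⁻¹ η)⁻¹
    rw [hh, hStil, covKL, Fintype.card_fin, interpPrecision]
  have hStil0 : Stil 0 = Sig := by
    rw [hStil, ← interpPrecision, interpPrecision_zero,
      nonsing_inv_nonsing_inv _ hSig.det_pos.ne'.isUnit]
  have hcont : ∀ Λ : Matrix (Fin d) (Fin d) ℝ, Λ.PosDef →
      ContinuousAt (fun Λ => covKL Sold Λ⁻¹) Λ := fun Λ hΛ =>
    (continuousAt_covKL hSold_det hΛ.inv.det_pos.ne').comp
      (continuousAt_inv_of_det_ne_zero hΛ.det_pos.ne')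
  have h0 : h 0 = covKL Sold Sig := by rw [hh, hStil0, covKL, Fintype.card_fin]
  refine ⟨?_, by rw [hh, hStil0], h0 ▸ covKL_pos hSold hSig hne, ?_⟩
  · rw [h_eq]
    intro η (hη : 0 ≤ η)
    exact ((hcont _ (posDef_interpPrecision hSold.inv.posSemidef hSig.inv hη)).comp
      (continuousAt_interpPrecision _ _ (by positivity))).continuousWithinAt
  · have hlim := (hcont _ hSold.inv).tendsto.comp (tendsto_interpPrecision_atTop Sold⁻¹ Sig⁻¹)
    beta_reduce at hlim
    rwa [nonsing_inv_nonsing_inv _ hSold_det.isUnit, covKL_self hSold_det, ← h_eq] at hlim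
end
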